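/- arXiv:2206.07672 — 8 statements merged into one kernel-verified Lean document; each statement's English description precedes it below -/
import Mathlib

section
/- Let n ≥ 2 be a natural number and let L be a natural number with n/16 ≤ L ≤ n. Let X_1,…,X_L and Y_1,…,Y_L be {0,1}-valued random variables on a probability space such that the family (X_i)_{i=1}^L is mutually independent, the family (Y_i)_{i=1}^L is mutually independent, and for every i one has E[X_i] ≤ E[Y_i] − c·√(log n / n), where c ≥ 600 is a real constant. Set X = Σ_{i=1}^L X_i and Y = Σ_{i=1}^L Y_i. Then ℙ( Y > X + 24·√(n·log n) ) ≥ 1 − 1/n⁶. -/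
/-!
Each sum is a sum of independent `[0, 1]`-valued variables, so by Hoeffding's inequality it
deviates from its mean by `6 √(n log n)` with probability at most `exp (-72 n log n / L) ≤ n⁻⁷`
(as `L ≤ n`). The mean gap is at least `L c √(log n / n) ≥ (75/2) √(n log n)`, which exceeds
`2 · 6 √(n log n) + 24 √(n log n)`, so outside these two deviation events `Y > X + 24 √(n log n)`;
a union bound gives failure probability at most `2 n⁻⁷ ≤ n⁻⁶`.
-/

open MeasureTheory ProbabilityTheory Real

namespace ProbabilityTheory

lemma exp_neg_sq_div_hoeffding_param {ι : Type*} [Fintype ι] (a b ε : ℝ) :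
    exp (-ε ^ 2 / (2 * ((Fintype.card ι * (‖b - a‖₊ / 2) ^ 2 : NNReal) : ℝ))) =
      exp (-2 * ε ^ 2 / (Fintype.card ι * (b - a) ^ 2)) := by
  congr 1
  push_cast
  rw [Real.norm_eq_abs, div_pow, sq_abs]
  field_simp

variable {Ω ι : Type*} [MeasurableSpace Ω] {μ : Measure Ω} [IsProbabilityMeasure μ] [Fintype ι]
  {X : ι → Ω → ℝ} {a b : ℝ}

lemma hasSubgaussianMGF_sum_sub_integral_of_mem_Icc (hindep : iIndepFun X μ)
    (hmeas : ∀ i, AEMeasurable (X i) μ) (hab : ∀ i, ∀ᵐ ω ∂μ, X i ω ∈ Set.Icc a b) :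
    HasSubgaussianMGF (fun ω ↦ ∑ i, (X i ω - μ[X i]))
      (Fintype.card ι * (‖b - a‖₊ / 2) ^ 2) μ := by
  have hcentered : iIndepFun (fun i ω ↦ X i ω - μ[X i]) μ :=
    hindep.comp (fun i (y : ℝ) ↦ y - ∫ ω, X i ω ∂μ) fun _ ↦ measurable_id.sub_const _
  simpa using HasSubgaussianMGF.sum_of_iIndepFun hcentered (s := Finset.univ)
    fun i _ ↦ hasSubgaussianMGF_of_mem_Icc (hmeas i) (hab i)

lemma measureReal_sum_ge_add_le (hindep : iIndepFun X μ) (hmeas : ∀ i, AEMeasurable (X i) μ)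
    (hab : ∀ i, ∀ᵐ ω ∂μ, X i ω ∈ Set.Icc a b) {ε : ℝ} (hε : 0 ≤ ε) :
    μ.real {ω | ∑ i, μ[X i] + ε ≤ ∑ i, X i ω} ≤
      exp (-2 * ε ^ 2 / (Fintype.card ι * (b - a) ^ 2)) := by
  have h := (hasSubgaussianMGF_sum_sub_integral_of_mem_Icc hindep hmeas hab).measure_ge_le hε
  rw [exp_neg_sq_div_hoeffding_param] at h
  refine (measureReal_mono fun ω hω ↦ ?_).trans h
  simp only [Set.mem_ofPred_eq, Finset.sum_sub_distrib] at hω ⊢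
  linarith

lemma measureReal_sum_le_sub_le (hindep : iIndepFun X μ) (hmeas : ∀ i, AEMeasurable (X i) μ)
    (hab : ∀ i, ∀ᵐ ω ∂μ, X i ω ∈ Set.Icc a b) {ε : ℝ} (hε : 0 ≤ ε) :
    μ.real {ω | ∑ i, X i ω ≤ ∑ i, μ[X i] - ε} ≤
      exp (-2 * ε ^ 2 / (Fintype.card ι * (b - a) ^ 2)) := by
  have h := (hasSubgaussianMGF_sum_sub_integral_of_mem_Icc hindep hmeas hab).neg.measure_ge_le hε
  rw [exp_neg_sq_div_hoeffding_param] at h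
  refine (measureReal_mono fun ω hω ↦ ?_).trans h
  simp only [Set.mem_ofPred_eq, Pi.neg_apply, Finset.sum_sub_distrib] at hω ⊢
  linarith

end ProbabilityTheory

lemma MeasureTheory.ofReal_one_sub_le_of_compl_subset_union {Ω : Type*} [MeasurableSpace Ω]
    {μ : Measure Ω} [IsProbabilityMeasure μ] {A B C : Set Ω} (h : Aᶜ ⊆ B ∪ C) {δ : ℝ}
    (hδ : μ.real B + μ.real C ≤ δ) : ENNReal.ofReal (1 - δ) ≤ μ A := by
  rw [ENNReal.ofReal_le_iff_le_toReal (measure_ne_top μ A), ← measureReal_def]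
  have hcover : 1 ≤ μ.real A + μ.real Aᶜ := by
    simpa using measureReal_union_le (μ := μ) A Aᶜ
  linarith [measureReal_mono (μ := μ) h, measureReal_union_le (μ := μ) B C]

lemma mul_sqrt_div_eq_sqrt_mul {x : ℝ} (hx : 0 ≤ x) (y : ℝ) : x * √(y / x) = √(x * y) := by
  rcases hx.eq_or_lt with rfl | hx
  · simp
  rw [← Real.sqrt_sq hx.le, ← Real.sqrt_mul (sq_nonneg x), Real.sqrt_sq hx.le]
  congr 1
  field_simp

lemma sqrt_mul_log_le_mul_sqrt_log_div {n L c : ℝ} (hn : 1 ≤ n) (hL : n / 16 ≤ L)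
    (hc : 600 ≤ c) : 75 / 2 * √(n * log n) ≤ L * (c * √(log n / n)) := by
  have hs : 0 ≤ √(log n / n) := Real.sqrt_nonneg _
  calc 75 / 2 * √(n * log n) = n / 16 * (600 * √(log n / n)) := by
        rw [← mul_sqrt_div_eq_sqrt_mul (by linarith)]; ring
    _ ≤ L * (c * √(log n / n)) := by gcongr; linarith

lemma two_mul_exp_neg_le_inv_pow_six {n L : ℝ} (hn : 2 ≤ n) (hL0 : 0 < L) (hLn : L ≤ n) :
    2 * exp (-2 * (6 * √(n * log n)) ^ 2 / L) ≤ 1 / n ^ 6 := by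
  have hlog : 0 < log n := Real.log_pos (by linarith)
  have hexponent : -2 * (6 * √(n * log n)) ^ 2 / L ≤ -log (n ^ 7) := by
    rw [mul_pow, Real.sq_sqrt (by positivity), Real.log_pow, div_le_iff₀ hL0]
    push_cast
    nlinarith [mul_le_mul_of_nonneg_right hLn hlog.le]
  calc 2 * exp (-2 * (6 * √(n * log n)) ^ 2 / L) ≤ 2 * (n ^ 7)⁻¹ := by
        rw [← Real.exp_log (by positivity : (0 : ℝ) < (n ^ 7)⁻¹), Real.log_inv]
        gcongr
    _ ≤ 1 / n ^ 6 := by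
        rw [← div_eq_mul_inv, div_le_div_iff₀ (by positivity) (by positivity), pow_succ]
        nlinarith [pow_pos (by linarith : (0 : ℝ) < n) 6]

theorem stmt_0 {Ω : Type*} [MeasureSpace Ω] [IsProbabilityMeasure (ℙ : Measure Ω)]
    (n L : ℕ) (hn : 2 ≤ n) (hL1 : (n : ℝ) / 16 ≤ L) (hL2 : L ≤ n)
    (c : ℝ) (hc : 600 ≤ c)
    (X Y : Fin L → Ω → ℝ)
    (hXmeas : ∀ i, Measurable (X i)) (hYmeas : ∀ i, Measurable (Y i))
    (hX01 : ∀ i ω, X i ω = 0 ∨ X i ω = 1)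
    (hY01 : ∀ i ω, Y i ω = 0 ∨ Y i ω = 1)
    (hXindep : iIndepFun X ℙ)
    (hYindep : iIndepFun Y ℙ)
    (hmean : ∀ i, ∫ ω, X i ω ∂ℙ ≤ (∫ ω, Y i ω ∂ℙ) - c * Real.sqrt (Real.log n / n)) :
    ENNReal.ofReal (1 - 1 / (n : ℝ) ^ 6) ≤
      ℙ {ω | (∑ i, X i ω) + 24 * Real.sqrt ((n : ℝ) * Real.log n) < ∑ i, Y i ω} := by
  have hnR : (2 : ℝ) ≤ n := by exact_mod_cast hn
  have hL0 : (0 : ℝ) < L := (by positivity : (0 : ℝ) < n / 16).trans_le hL1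
  set R := √((n : ℝ) * log n)
  have hgap : ∑ i, ∫ ω, X i ω ∂ℙ + 75 / 2 * R ≤ ∑ i, ∫ ω, Y i ω ∂ℙ := by
    have := Finset.sum_le_sum fun i (_ : i ∈ Finset.univ) ↦ le_sub_iff_add_le.mp (hmean i)
    rw [Finset.sum_add_distrib, Finset.sum_const, Finset.card_univ, Fintype.card_fin,
      nsmul_eq_mul] at this
    linarith [sqrt_mul_log_le_mul_sqrt_log_div (by linarith) hL1 hc]
  have hmem {Z : Fin L → Ω → ℝ} (h01 : ∀ i ω, Z i ω = 0 ∨ Z i ω = 1) (i : Fin L) :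
      ∀ᵐ ω, Z i ω ∈ Set.Icc (0 : ℝ) 1 :=
    ae_of_all _ fun ω ↦ by rcases h01 i ω with h | h <;> simp [h]
  have hXtail := measureReal_sum_ge_add_le hXindep (fun i ↦ (hXmeas i).aemeasurable)
    (hmem hX01) (ε := 6 * R) (by positivity)
  have hYtail := measureReal_sum_le_sub_le hYindep (fun i ↦ (hYmeas i).aemeasurable)
    (hmem hY01) (ε := 6 * R) (by positivity)
  simp only [Fintype.card_fin, sub_zero, one_pow, mul_one] at hXtail hYtail
  refine ofReal_one_sub_le_of_compl_subset_union (fun ω hω ↦ ?_)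
    ((add_le_add hXtail hYtail).trans ?_)
  · simp only [Set.mem_compl_iff, Set.mem_ofPred_eq, Set.mem_union, not_lt] at hω ⊢
    by_contra! ⟨hXsmall, hYlarge⟩
    linarith [Real.sqrt_nonneg ((n : ℝ) * log n)]
  · linarith [two_mul_exp_neg_le_inv_pow_six hnR hL0 (by exact_mod_cast hL2)]
end

section
/- Let n ≥ 2 be a natural number and let L be a natural number with n/16 ≤ L ≤ n. Let X_1,…,X_L and Y_1,…,Y_L be {0,1}-valued random variables on a probability space such that the family (X_i)_{i=1}^L is mutually independent, the family (Y_i)_{i=1}^L is mutually independent, and for every i one has E[X_i] = E[Y_i]. Set X = Σ_{i=1}^L X_i and Y = Σ_{i=1}^L Y_i. Then ℙ( |X − Y| ≤ 12·√(n·log n) ) ≥ 1 − 1/n⁶. -/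
/-!
Center both sums. By Hoeffding's lemma each centered `0/1` variable is sub-Gaussian with
parameter `1/4`, so by Hoeffding's inequality each centered sum exceeds `6 √(n log n)` in absolute
value with probability at most `2 exp (-72 n log n / L) ≤ 2 n⁻⁷²`. Since the means agree, the two
centered sums differ by exactly `X - Y`, and a union bound gives `ℙ (|X - Y| > 12 √(n log n)) ≤
4 n⁻⁷² ≤ n⁻⁶`.
-/

open MeasureTheory ProbabilityTheory Real Finset

section Hoeffding

variable {Ω ι : Type*} {mΩ : MeasurableSpace Ω} {μ : Measure Ω} [IsProbabilityMeasure μ]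
  {a b : ℝ}

lemma hasSubgaussianMGF_sum_sub_integral_of_mem_Icc {X : ι → Ω → ℝ} (hindep : iIndepFun X μ)
    (hmeas : ∀ i, AEMeasurable (X i) μ) (hX : ∀ i, ∀ᵐ ω ∂μ, X i ω ∈ Set.Icc a b) (s : Finset ι) :
    HasSubgaussianMGF (fun ω ↦ ∑ i ∈ s, (X i ω - μ[X i])) (#s * (‖b - a‖₊ / 2) ^ 2) μ := by
  have hcentered : iIndepFun (fun i ↦ (· - μ[X i]) ∘ X i) μ :=
    hindep.comp (fun i x ↦ x - μ[X i]) fun _ ↦ measurable_id.sub_const _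
  simpa using HasSubgaussianMGF.sum_of_iIndepFun hcentered (s := s)
    fun i _ ↦ hasSubgaussianMGF_of_mem_Icc (hmeas i) (hX i)

lemma measureReal_le_abs_sum_sub_integral_le {X : ι → Ω → ℝ} (hindep : iIndepFun X μ)
    (hmeas : ∀ i, AEMeasurable (X i) μ) (hX : ∀ i, ∀ᵐ ω ∂μ, X i ω ∈ Set.Icc a b)
    (s : Finset ι) {ε : ℝ} (hε : 0 ≤ ε) :
    μ.real {ω | ε ≤ |∑ i ∈ s, (X i ω - μ[X i])|} ≤
      2 * exp (-2 * ε ^ 2 / (#s * (b - a) ^ 2)) := by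
  have h := hasSubgaussianMGF_sum_sub_integral_of_mem_Icc hindep hmeas hX s
  have hexponent : -ε ^ 2 / (2 * ((#s * (‖b - a‖₊ / 2) ^ 2 : NNReal) : ℝ)) =
      -2 * ε ^ 2 / (#s * (b - a) ^ 2) := by
    push_cast
    rw [Real.norm_eq_abs, div_pow, sq_abs]
    generalize (b - a) ^ 2 = c
    ring
  have hsplit : {ω | ε ≤ |∑ i ∈ s, (X i ω - μ[X i])|} ⊆
      {ω | ε ≤ ∑ i ∈ s, (X i ω - μ[X i])} ∪ {ω | ε ≤ (-fun ω ↦ ∑ i ∈ s, (X i ω - μ[X i])) ω} := by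
    intro ω hω
    rcases le_abs'.mp (Set.mem_ofPred_eq ▸ hω) with h | h
    · right
      simp only [Set.mem_ofPred_eq, Pi.neg_apply]
      linarith
    · exact Or.inl h
  calc _ ≤ _ := measureReal_mono hsplit
    _ ≤ _ := measureReal_union_le _ _
    _ ≤ 2 * exp (-2 * ε ^ 2 / (#s * (b - a) ^ 2)) := by
      rw [two_mul, ← hexponent]
      exact add_le_add (h.measure_ge_le hε) (h.neg.measure_ge_le hε)

lemma measureReal_lt_abs_sum_sub_sum_le {X Y : ι → Ω → ℝ} (hXindep : iIndepFun X μ)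
    (hYindep : iIndepFun Y μ) (hXmeas : ∀ i, AEMeasurable (X i) μ)
    (hYmeas : ∀ i, AEMeasurable (Y i) μ) (hX : ∀ i, ∀ᵐ ω ∂μ, X i ω ∈ Set.Icc a b)
    (hY : ∀ i, ∀ᵐ ω ∂μ, Y i ω ∈ Set.Icc a b) (hmean : ∀ i, μ[X i] = μ[Y i])
    (s : Finset ι) {ε : ℝ} (hε : 0 ≤ ε) :
    μ.real {ω | 2 * ε < |∑ i ∈ s, X i ω - ∑ i ∈ s, Y i ω|} ≤
      4 * exp (-2 * ε ^ 2 / (#s * (b - a) ^ 2)) := by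
  have hsplit : {ω | 2 * ε < |∑ i ∈ s, X i ω - ∑ i ∈ s, Y i ω|} ⊆
      {ω | ε ≤ |∑ i ∈ s, (X i ω - μ[X i])|} ∪ {ω | ε ≤ |∑ i ∈ s, (Y i ω - μ[Y i])|} := by
    intro ω hω
    have hdiff : ∑ i ∈ s, X i ω - ∑ i ∈ s, Y i ω =
        ∑ i ∈ s, (X i ω - μ[X i]) - ∑ i ∈ s, (Y i ω - μ[Y i]) := by
      simp only [sum_sub_distrib, hmean]
      ring
    simp only [Set.mem_ofPred_eq, hdiff] at hω
    by_contra! h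
    simp only [Set.mem_union, Set.mem_ofPred_eq, not_or, not_le] at h
    linarith [abs_sub (∑ i ∈ s, (X i ω - μ[X i])) (∑ i ∈ s, (Y i ω - μ[Y i]))]
  calc _ ≤ _ := measureReal_mono hsplit
    _ ≤ _ := measureReal_union_le _ _
    _ ≤ 4 * exp (-2 * ε ^ 2 / (#s * (b - a) ^ 2)) := by
      linarith [measureReal_le_abs_sum_sub_integral_le hXindep hXmeas hX s hε,
        measureReal_le_abs_sum_sub_integral_le hYindep hYmeas hY s hε]

end Hoeffding

lemma four_mul_exp_le_one_div_pow {n L : ℝ} (hn : 2 ≤ n) (hL : 0 < L) (hLn : L ≤ n) :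
    4 * exp (-2 * (6 * √(n * log n)) ^ 2 / L) ≤ 1 / n ^ 6 := by
  have hlog : 0 < log n := log_pos (by linarith)
  have hexponent : -2 * (6 * √(n * log n)) ^ 2 / L ≤ -log (n ^ 72) := by
    rw [mul_pow, sq_sqrt (by positivity), log_pow, div_le_iff₀ hL]
    push_cast
    nlinarith
  have hpow : 4 * n ^ 6 ≤ n ^ 72 := by
    have : (4 : ℝ) ≤ n ^ 66 := le_trans (by norm_num) (pow_le_pow_left₀ (by norm_num) hn 66)
    nlinarith [pow_pos (show (0 : ℝ) < n by linarith) 6]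
  calc 4 * exp (-2 * (6 * √(n * log n)) ^ 2 / L) ≤ 4 * exp (-log (n ^ 72)) := by gcongr
    _ = 4 / n ^ 72 := by rw [exp_neg, exp_log (by positivity), div_eq_mul_inv]
    _ ≤ 1 / n ^ 6 := by rw [div_le_div_iff₀ (by positivity) (by positivity)]; linarith

theorem stmt_1 {Ω : Type*} [MeasureSpace Ω] [IsProbabilityMeasure (ℙ : Measure Ω)]
    (n L : ℕ) (hn : 2 ≤ n) (hL1 : (n : ℝ) / 16 ≤ L) (hL2 : L ≤ n)
    (X Y : Fin L → Ω → ℝ)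
    (hXmeas : ∀ i, Measurable (X i)) (hYmeas : ∀ i, Measurable (Y i))
    (hX01 : ∀ i ω, X i ω = 0 ∨ X i ω = 1)
    (hY01 : ∀ i ω, Y i ω = 0 ∨ Y i ω = 1)
    (hXindep : iIndepFun X ℙ)
    (hYindep : iIndepFun Y ℙ)
    (hmean : ∀ i, ∫ ω, X i ω ∂ℙ = ∫ ω, Y i ω ∂ℙ) :
    ENNReal.ofReal (1 - 1 / (n : ℝ) ^ 6) ≤
      ℙ {ω | |(∑ i, X i ω) - ∑ i, Y i ω| ≤ 12 * Real.sqrt ((n : ℝ) * Real.log n)} := by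
  set E := {ω | |(∑ i, X i ω) - ∑ i, Y i ω| ≤ 12 * Real.sqrt ((n : ℝ) * Real.log n)}
  have hn2 : (2 : ℝ) ≤ n := by exact_mod_cast hn
  have hL : (0 : ℝ) < L := by linarith
  have hIcc : ∀ (Z : Fin L → Ω → ℝ), (∀ i ω, Z i ω = 0 ∨ Z i ω = 1) →
      ∀ i, ∀ᵐ ω ∂ℙ, Z i ω ∈ Set.Icc (0 : ℝ) 1 := fun Z hZ i ↦
    ae_of_all _ fun ω ↦ by rcases hZ i ω with h | h <;> simp [h]
  have hEc : (ℙ : Measure Ω).real Eᶜ ≤ 1 / (n : ℝ) ^ 6 := by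
    have hfar := measureReal_lt_abs_sum_sub_sum_le hXindep hYindep
      (fun i ↦ (hXmeas i).aemeasurable) (fun i ↦ (hYmeas i).aemeasurable)
      (hIcc X hX01) (hIcc Y hY01) hmean univ
      (ε := 6 * √(n * log n)) (by positivity)
    simp only [card_univ, Fintype.card_fin, sub_zero, one_pow, mul_one, ← mul_assoc] at hfar
    norm_num only at hfar
    simpa [E, Set.compl_ofPred] using
      hfar.trans (four_mul_exp_le_one_div_pow hn2 hL (by exact_mod_cast hL2))
  have hcover : 1 ≤ (ℙ : Measure Ω).real E + (ℙ : Measure Ω).real Eᶜ := by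
    simpa [Set.union_compl_self] using measureReal_union_le (μ := ℙ) E Eᶜ
  rw [← ofReal_measureReal]
  exact ENNReal.ofReal_le_ofReal (by linarith)
end

section
/- Let n ≥ 8 be a natural number and τ ≥ 10⁴ a real constant. Let A, B₁, B₂ be finite index sets with n/16 ≤ |A| ≤ n, |B₁| ≤ 2·√n and |B₂| ≤ 2·√n. Let (U_x)_{x∈A} together with (V_y)_{y∈B₁} be a mutually independent family of {0,1}-valued random variables on a probability space, and let (W_x)_{x∈A} together with (Z_y)_{y∈B₂} also be a mutually independent family of {0,1}-valued random variables (the two families need not be independent of each other). Suppose E[W_x] − E[U_x] ≥ τ·√(log n)/(9·√n) for every x ∈ A. Then ℙ( Σ_{x∈A} W_x + Σ_{y∈B₂} Z_y > Σ_{x∈A} U_x + Σ_{y∈B₁} V_y ) ≥ 1 − 1/n⁶. -/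
open MeasureTheory ProbabilityTheory Real

/-!
The two score families need not be independent of each other, so they are compared through a
deterministic threshold: each sum concentrates around its mean by Hoeffding's inequality, and a
union bound handles the two tails. Summing the per-leaf gaps over `A` separates the means by at
least `τ √(n log n) / 144 - 2√n`, which leaves room for deviations `ε = 3 √(n log n)` on either
side. Each sum has at most `2n` terms, so each tail is at most `exp (-2ε² / 2n) = n⁻⁹`.
-/

namespace ProbabilityTheory

variable {Ω ι : Type*} {m : MeasurableSpace Ω} {μ : Measure Ω} [IsProbabilityMeasure μ]
  [Fintype ι] {X : ι → Ω → ℝ}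

lemma hasSubgaussianMGF_sum_sub_integral_of_mem_Icc_zero_one (hX : iIndepFun X μ)
    (hXm : ∀ i, AEMeasurable (X i) μ) (hX01 : ∀ i, ∀ᵐ ω ∂μ, X i ω ∈ Set.Icc 0 1) :
    HasSubgaussianMGF (fun ω ↦ ∑ i, (X i ω - μ[X i])) (Fintype.card ι / 4) μ := by
  have hsub : iIndepFun (fun i ω ↦ X i ω - μ[X i]) μ :=
    hX.comp (fun i x ↦ x - ∫ ω, X i ω ∂μ) fun i ↦ measurable_id.sub_const _
  convert HasSubgaussianMGF.sum_of_iIndepFun hsub (s := Finset.univ) fun i _ ↦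
    hasSubgaussianMGF_of_mem_Icc (hXm i) (hX01 i) using 1
  simp only [sub_zero, nnnorm_one, one_div, inv_pow, Finset.sum_const, Finset.card_univ,
    nsmul_eq_mul]
  ring

lemma measureReal_integral_add_le_sum_le (hX : iIndepFun X μ)
    (hXm : ∀ i, AEMeasurable (X i) μ) (hX01 : ∀ i, ∀ᵐ ω ∂μ, X i ω ∈ Set.Icc 0 1)
    {ε : ℝ} (hε : 0 ≤ ε) :
    μ.real {ω | ∑ i, μ[X i] + ε ≤ ∑ i, X i ω} ≤ exp (-2 * ε ^ 2 / Fintype.card ι) := by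
  convert (hasSubgaussianMGF_sum_sub_integral_of_mem_Icc_zero_one hX hXm hX01).measure_ge_le hε
    using 2
  · ext ω
    simp only [Set.mem_ofPred_eq, Finset.sum_sub_distrib]
    constructor <;> intro h <;> linarith
  · push_cast
    ring

lemma measureReal_sum_le_integral_sub_le (hX : iIndepFun X μ)
    (hXm : ∀ i, AEMeasurable (X i) μ) (hX01 : ∀ i, ∀ᵐ ω ∂μ, X i ω ∈ Set.Icc 0 1)
    {ε : ℝ} (hε : 0 ≤ ε) :
    μ.real {ω | ∑ i, X i ω ≤ ∑ i, μ[X i] - ε} ≤ exp (-2 * ε ^ 2 / Fintype.card ι) := by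
  convert (hasSubgaussianMGF_sum_sub_integral_of_mem_Icc_zero_one hX hXm hX01).neg.measure_ge_le hε
    using 2
  · ext ω
    simp only [Set.mem_ofPred_eq, Pi.neg_apply, Finset.sum_sub_distrib]
    constructor <;> intro h <;> linarith
  · push_cast
    ring

lemma integral_mem_Icc_zero_one {Y : Ω → ℝ} (hY : ∀ᵐ ω ∂μ, Y ω ∈ Set.Icc 0 1) :
    μ[Y] ∈ Set.Icc 0 1 := by
  refine ⟨integral_nonneg_of_ae (hY.mono fun ω h ↦ h.1), ?_⟩
  have h := norm_integral_le_of_norm_le_const (hY.mono fun ω h ↦ by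
    rw [Real.norm_of_nonneg h.1]; exact h.2)
  simpa using (le_abs_self _).trans h

lemma measureReal_sum_le_sum_le {κ : Type*} [Fintype κ] {Y : κ → Ω → ℝ}
    (hX : iIndepFun X μ) (hXm : ∀ i, AEMeasurable (X i) μ)
    (hX01 : ∀ i, ∀ᵐ ω ∂μ, X i ω ∈ Set.Icc 0 1)
    (hY : iIndepFun Y μ) (hYm : ∀ j, AEMeasurable (Y j) μ)
    (hY01 : ∀ j, ∀ᵐ ω ∂μ, Y j ω ∈ Set.Icc 0 1)
    {ε : ℝ} (hε : 0 ≤ ε) (hgap : ∑ i, μ[X i] + 2 * ε ≤ ∑ j, μ[Y j]) :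
    μ.real {ω | ∑ j, Y j ω ≤ ∑ i, X i ω} ≤
      exp (-2 * ε ^ 2 / Fintype.card ι) + exp (-2 * ε ^ 2 / Fintype.card κ) := by
  have hsub : {ω | ∑ j, Y j ω ≤ ∑ i, X i ω} ⊆
      {ω | ∑ i, μ[X i] + ε ≤ ∑ i, X i ω} ∪ {ω | ∑ j, Y j ω ≤ ∑ j, μ[Y j] - ε} := by
    intro ω hω
    simp only [Set.mem_union, Set.mem_ofPred_eq] at hω ⊢
    by_contra! h
    linarith [h.1, h.2]
  calc μ.real {ω | ∑ j, Y j ω ≤ ∑ i, X i ω}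
      ≤ μ.real {ω | ∑ i, μ[X i] + ε ≤ ∑ i, X i ω} +
          μ.real {ω | ∑ j, Y j ω ≤ ∑ j, μ[Y j] - ε} :=
        (measureReal_mono hsub).trans (measureReal_union_le _ _)
    _ ≤ _ := add_le_add (measureReal_integral_add_le_sum_le hX hXm hX01 hε)
        (measureReal_sum_le_integral_sub_le hY hYm hY01 hε)

lemma ofReal_one_sub_le_measure_lt {f g : Ω → ℝ} (hf : Measurable f) (hg : Measurable g) {p : ℝ}
    (h : μ.real {ω | g ω ≤ f ω} ≤ p) : ENNReal.ofReal (1 - p) ≤ μ {ω | f ω < g ω} := by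
  have hlt : {ω | f ω < g ω} = {ω | g ω ≤ f ω}ᶜ := by
    ext ω
    simp
  rw [ENNReal.ofReal_le_iff_le_toReal (measure_ne_top _ _), ← measureReal_def, hlt,
    probReal_compl_eq_one_sub (measurableSet_le hg hf)]
  linarith

end ProbabilityTheory

lemma sum_add_sum_add_le_sum_add_sum {A B₁ B₂ : Type*} [Fintype A] [Fintype B₁] [Fintype B₂]
    {u w : A → ℝ} {v : B₁ → ℝ} {z : B₂ → ℝ} {δ c : ℝ} (hδ : ∀ x, δ ≤ w x - u x)
    (hv : ∀ y, v y ≤ 1) (hz : ∀ y, 0 ≤ z y) (hc : c + Fintype.card B₁ ≤ Fintype.card A * δ) :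
    ∑ x, u x + ∑ y, v y + c ≤ ∑ x, w x + ∑ y, z y := by
  have hwu : Fintype.card A * δ ≤ ∑ x, w x - ∑ x, u x := by
    simpa [← Finset.sum_sub_distrib] using Finset.card_nsmul_le_sum Finset.univ _ _ fun x _ ↦ hδ x
  have hv' : ∑ y, v y ≤ Fintype.card B₁ :=
    (Finset.sum_le_card_nsmul _ _ 1 fun y _ ↦ hv y).trans_eq (by simp)
  linarith [Finset.sum_nonneg fun y (_ : y ∈ Finset.univ) ↦ hz y]

lemma one_lt_log_of_three_le {n : ℝ} (hn : 3 ≤ n) : 1 < log n := by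
  rw [lt_log_iff_exp_lt (by linarith)]
  linarith [exp_one_lt_d9]

lemma six_mul_sqrt_mul_sqrt_log_add_two_mul_sqrt_le {n τ a : ℝ} (hn : 3 ≤ n) (hτ : 10 ^ 4 ≤ τ)
    (ha : n / 16 ≤ a) :
    2 * (3 * √n * √(log n)) + 2 * √n ≤ a * (τ * √(log n) / (9 * √n)) := by
  have hs : 0 < √n := sqrt_pos.2 (by linarith)
  have hL : 1 ≤ √(log n) := one_le_sqrt.2 (one_lt_log_of_three_le hn).le
  have hsa : n / 16 * (τ * √(log n) / (9 * √n)) = τ * √n * √(log n) / 144 := by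
    field_simp
    rw [sq_sqrt (by linarith)]
    ring
  calc 2 * (3 * √n * √(log n)) + 2 * √n ≤ τ * √n * √(log n) / 144 := by
        nlinarith [mul_le_mul_of_nonneg_right hτ (by positivity : 0 ≤ √n * √(log n))]
    _ = n / 16 * (τ * √(log n) / (9 * √n)) := hsa.symm
    _ ≤ a * (τ * √(log n) / (9 * √n)) := by gcongr

lemma exp_neg_two_mul_sq_div_le_inv_pow {n m : ℝ} (hn : 1 ≤ n) (hm : 0 < m) (hmn : m ≤ 2 * n) :
    exp (-2 * (3 * √n * √(log n)) ^ 2 / m) ≤ (n ^ 9)⁻¹ := by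
  have hlog : 0 ≤ log n := log_nonneg hn
  have hsq : (3 * √n * √(log n)) ^ 2 = 9 * (n * log n) := by
    rw [mul_pow, mul_pow, sq_sqrt (by linarith), sq_sqrt hlog]
    ring
  have hexp : -2 * (3 * √n * √(log n)) ^ 2 / m ≤ -(9 * log n) := by
    rw [hsq, div_le_iff₀ hm]
    nlinarith [mul_le_mul_of_nonneg_left hmn hlog]
  calc exp (-2 * (3 * √n * √(log n)) ^ 2 / m) ≤ exp (-(9 * log n)) := exp_le_exp.2 hexp
    _ = (n ^ 9)⁻¹ := by
      rw [exp_neg, show (9 : ℝ) = (9 : ℕ) by norm_num, exp_nat_mul, exp_log (by linarith)]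

lemma exp_neg_add_exp_neg_le_one_div_pow_six {n m₁ m₂ : ℝ} (hn : 2 ≤ n)
    (hm₁ : 0 < m₁) (hm₁n : m₁ ≤ 2 * n) (hm₂ : 0 < m₂) (hm₂n : m₂ ≤ 2 * n) :
    exp (-2 * (3 * √n * √(log n)) ^ 2 / m₁) + exp (-2 * (3 * √n * √(log n)) ^ 2 / m₂) ≤
      1 / n ^ 6 := by
  have hpow : 2 * (n ^ 9)⁻¹ ≤ 1 / n ^ 6 := by
    rw [← div_eq_mul_inv, div_le_div_iff₀ (by positivity) (by positivity)]
    have h3 : 2 ≤ n ^ 3 := by linarith [le_self_pow₀ (by linarith : 1 ≤ n) three_ne_zero]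
    nlinarith [mul_le_mul_of_nonneg_right h3 (pow_pos (by linarith : 0 < n) 6).le]
  linarith [exp_neg_two_mul_sq_div_le_inv_pow (by linarith) hm₁ hm₁n,
    exp_neg_two_mul_sq_div_le_inv_pow (by linarith) hm₂ hm₂n]

theorem stmt_5 {Ω : Type*} [MeasureSpace Ω] [IsProbabilityMeasure (ℙ : Measure Ω)]
    (n : ℕ) (hn : 8 ≤ n) (τ : ℝ) (hτ : 10 ^ 4 ≤ τ)
    {A B₁ B₂ : Type*} [Fintype A] [Fintype B₁] [Fintype B₂]
    (hA1 : (n : ℝ) / 16 ≤ Fintype.card A) (hA2 : (Fintype.card A : ℝ) ≤ n)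
    (hB1 : (Fintype.card B₁ : ℝ) ≤ 2 * Real.sqrt n)
    (hB2 : (Fintype.card B₂ : ℝ) ≤ 2 * Real.sqrt n)
    (U W : A → Ω → ℝ) (V : B₁ → Ω → ℝ) (Z : B₂ → Ω → ℝ)
    (hUmeas : ∀ x, Measurable (U x)) (hWmeas : ∀ x, Measurable (W x))
    (hVmeas : ∀ y, Measurable (V y)) (hZmeas : ∀ y, Measurable (Z y))
    (hU01 : ∀ x ω, U x ω = 0 ∨ U x ω = 1) (hW01 : ∀ x ω, W x ω = 0 ∨ W x ω = 1)
    (hV01 : ∀ y ω, V y ω = 0 ∨ V y ω = 1) (hZ01 : ∀ y ω, Z y ω = 0 ∨ Z y ω = 1)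
    (hUVindep : iIndepFun (Sum.elim U V) ℙ)
    (hWZindep : iIndepFun (Sum.elim W Z) ℙ)
    (hmean : ∀ x : A, τ * Real.sqrt (Real.log n) / (9 * Real.sqrt n) ≤
      (∫ ω, W x ω ∂ℙ) - ∫ ω, U x ω ∂ℙ) :
    ENNReal.ofReal (1 - 1 / (n : ℝ) ^ 6) ≤
      ℙ {ω | (∑ x, U x ω) + ∑ y, V y ω < (∑ x, W x ω) + ∑ y, Z y ω} := by
  have hn' : (8 : ℝ) ≤ n := by exact_mod_cast hn
  have icc : ∀ {f : Ω → ℝ}, (∀ ω, f ω = 0 ∨ f ω = 1) → ∀ᵐ ω ∂ℙ, f ω ∈ Set.Icc 0 1 :=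
    fun hf ↦ ae_of_all _ fun ω ↦ by rcases hf ω with h | h <;> simp [h]
  have hgap := sum_add_sum_add_le_sum_add_sum (c := 2 * (3 * √n * √(log n))) hmean
    (fun y ↦ (integral_mem_Icc_zero_one (icc (hV01 y))).2)
    (fun y ↦ (integral_mem_Icc_zero_one (icc (hZ01 y))).1)
    (by linarith [six_mul_sqrt_mul_sqrt_log_add_two_mul_sqrt_le (by linarith) hτ hA1])
  have hsep := measureReal_sum_le_sum_le (X := Sum.elim U V) (Y := Sum.elim W Z)
    (ε := 3 * √n * √(log n))
    hUVindep (Sum.forall.2 ⟨fun x ↦ (hUmeas x).aemeasurable, fun y ↦ (hVmeas y).aemeasurable⟩)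
    (Sum.forall.2 ⟨fun x ↦ icc (hU01 x), fun y ↦ icc (hV01 y)⟩)
    hWZindep (Sum.forall.2 ⟨fun x ↦ (hWmeas x).aemeasurable, fun y ↦ (hZmeas y).aemeasurable⟩)
    (Sum.forall.2 ⟨fun x ↦ icc (hW01 x), fun y ↦ icc (hZ01 y)⟩) (by positivity)
    (by simpa [Fintype.sum_sum_type] using hgap)
  simp only [Fintype.sum_sum_type, Sum.elim_inl, Sum.elim_inr, Fintype.card_sum,
    Nat.cast_add] at hsep
  have hsqrt : 2 * √(n : ℝ) ≤ n := by
    nlinarith [sq_sqrt (by linarith : (0 : ℝ) ≤ n), sqrt_nonneg (n : ℝ)]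
  have hB₁ : (0 : ℝ) ≤ Fintype.card B₁ := Nat.cast_nonneg _
  have hB₂ : (0 : ℝ) ≤ Fintype.card B₂ := Nat.cast_nonneg _
  refine ofReal_one_sub_le_measure_lt (by fun_prop) (by fun_prop) (hsep.trans ?_)
  exact exp_neg_add_exp_neg_le_one_div_pow_six (by linarith)
    (by linarith) (by linarith) (by linarith) (by linarith)
end

section
/- Let ρ > 0 be a real number, n ≥ 1 a natural number, and α, β real numbers with α ≥ 2/3 and β = α + 2ρ/√n. Define p₁ = β/(α + 2β), p₂ = p₃ = (α + β)/(2(α + 2β)), q₁ = q₂ = (α + β)/(2(α + 2β)), and q₃ = β/(α + 2β). Then (1/2)·[ (√p₁ − √q₁)² + (√p₂ − √q₂)² + (√p₃ − √q₃)² ] ≤ 4ρ²/n. -/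
/-! Only the first and third outcomes have different probabilities, and there `p₁ - q₁ = q₃ - p₃`
equals `(β - α) / (2 (α + 2β))`. All four probabilities are at least `1/4`, so `√p + √q ≥ 1` and
`(√p - √q)² = (p - q)² / (√p + √q)² ≤ (p - q)²`; with `α + 2β ≥ 2` this is at most
`(β - α)² / 16 ≤ (β - α)² = 4ρ²/n`. -/

open Real

theorem sq_sqrt_sub_sqrt_le_sq_sub {p q : ℝ} (hp : 1 / 4 ≤ p) (hq : 1 / 4 ≤ q) :
    (√p - √q) ^ 2 ≤ (p - q) ^ 2 := by
  have half_le_sqrt {x : ℝ} (hx : 1 / 4 ≤ x) : 1 / 2 ≤ √x :=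
    Real.le_sqrt_of_sq_le (by linarith)
  have hsum : 1 ≤ √p + √q := by linarith [half_le_sqrt hp, half_le_sqrt hq]
  have hfactor : (√p - √q) * (√p + √q) = p - q := by
    rw [mul_comm, ← sq_sub_sq, sq_sqrt (by linarith), sq_sqrt (by linarith)]
  rw [← hfactor, mul_pow]
  exact le_mul_of_one_le_right (sq_nonneg _) (one_le_pow₀ hsum)

section ThreePointOutcomes

variable {α β : ℝ}

theorem one_fourth_le_div_add_two_mul (hα : 0 < α) (hαβ : α ≤ β) :
    1 / 4 ≤ β / (α + 2 * β) := by
  rw [div_le_div_iff₀ (by norm_num) (by linarith)]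
  linarith

theorem one_fourth_le_add_div_two_mul_add_two_mul (hα : 0 < α) (hαβ : α ≤ β) :
    1 / 4 ≤ (α + β) / (2 * (α + 2 * β)) := by
  rw [div_le_div_iff₀ (by norm_num) (by linarith)]
  linarith

theorem div_sub_add_div_two_mul_eq :
    β / (α + 2 * β) - (α + β) / (2 * (α + 2 * β)) = (β - α) / (2 * (α + 2 * β)) := by
  field_simp
  ring

theorem div_sub_add_div_two_mul_le (hs : 2 ≤ α + 2 * β) (hαβ : α ≤ β) :
    β / (α + 2 * β) - (α + β) / (2 * (α + 2 * β)) ≤ (β - α) / 4 := by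
  rw [div_sub_add_div_two_mul_eq]
  exact div_le_div_of_nonneg_left (by linarith) (by norm_num) (by linarith)

end ThreePointOutcomes

theorem stmt_12_general (ρ : ℝ) (hρ : 0 < ρ) (n : ℕ)
    (α β : ℝ) (hα : 2 / 3 ≤ α) (hβ : β = α + 2 * ρ / Real.sqrt n)
    (p₁ p₂ p₃ q₁ q₂ q₃ : ℝ)
    (hp₁ : p₁ = β / (α + 2 * β))
    (hp₂ : p₂ = (α + β) / (2 * (α + 2 * β)))
    (hp₃ : p₃ = (α + β) / (2 * (α + 2 * β)))
    (hq₁ : q₁ = (α + β) / (2 * (α + 2 * β)))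
    (hq₂ : q₂ = (α + β) / (2 * (α + 2 * β)))
    (hq₃ : q₃ = β / (α + 2 * β)) :
    (1 / 2) * ((Real.sqrt p₁ - Real.sqrt q₁) ^ 2 + (Real.sqrt p₂ - Real.sqrt q₂) ^ 2 +
      (Real.sqrt p₃ - Real.sqrt q₃) ^ 2) ≤ 4 * ρ ^ 2 / n := by
  have hgap : 0 ≤ β - α := by rw [hβ, add_sub_cancel_left]; positivity
  have hgap_sq : (β - α) ^ 2 = 4 * ρ ^ 2 / n := by
    rw [hβ, add_sub_cancel_left, div_pow, sq_sqrt n.cast_nonneg]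
    ring
  have hα0 : 0 < α := by linarith
  have hαβ : α ≤ β := by linarith
  have hsum : (1 / 2) * ((√p₁ - √q₁) ^ 2 + (√p₂ - √q₂) ^ 2 + (√p₃ - √q₃) ^ 2)
      = (√p₁ - √q₁) ^ 2 := by
    rw [hp₂, hq₂, hp₃, hq₃, ← hp₁, ← hq₁]
    ring
  have hdiff : p₁ - q₁ ≤ (β - α) / 4 := by
    rw [hp₁, hq₁]
    exact div_sub_add_div_two_mul_le (by linarith) hαβ
  have hq_le_p : q₁ ≤ p₁ := by
    rw [hp₁, hq₁, ← sub_nonneg, div_sub_add_div_two_mul_eq]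
    exact div_nonneg hgap (by linarith)
  rw [hsum, ← hgap_sq]
  calc (√p₁ - √q₁) ^ 2
      ≤ (p₁ - q₁) ^ 2 := by
        apply sq_sqrt_sub_sqrt_le_sq_sub
        · rw [hp₁]; exact one_fourth_le_div_add_two_mul hα0 hαβ
        · rw [hq₁]; exact one_fourth_le_add_div_two_mul_add_two_mul hα0 hαβ
    _ ≤ ((β - α) / 4) ^ 2 := pow_le_pow_left₀ (sub_nonneg.mpr hq_le_p) hdiff 2
    _ ≤ (β - α) ^ 2 := by nlinarith

theorem stmt_12 (ρ : ℝ) (hρ : 0 < ρ) (n : ℕ) (hn : 1 ≤ n)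
    (α β : ℝ) (hα : 2 / 3 ≤ α) (hβ : β = α + 2 * ρ / Real.sqrt n)
    (p₁ p₂ p₃ q₁ q₂ q₃ : ℝ)
    (hp₁ : p₁ = β / (α + 2 * β))
    (hp₂ : p₂ = (α + β) / (2 * (α + 2 * β)))
    (hp₃ : p₃ = (α + β) / (2 * (α + 2 * β)))
    (hq₁ : q₁ = (α + β) / (2 * (α + 2 * β)))
    (hq₂ : q₂ = (α + β) / (2 * (α + 2 * β)))
    (hq₃ : q₃ = β / (α + 2 * β)) :
    (1 / 2) * ((Real.sqrt p₁ - Real.sqrt q₁) ^ 2 + (Real.sqrt p₂ - Real.sqrt q₂) ^ 2 +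
      (Real.sqrt p₃ - Real.sqrt q₃) ^ 2) ≤ 4 * ρ ^ 2 / n :=
  stmt_12_general ρ hρ n α β hα hβ p₁ p₂ p₃ q₁ q₂ q₃ hp₁ hp₂ hp₃ hq₁ hq₂ hq₃
end

section
/- Let α, β be real numbers with 2/3 ≤ α ≤ β. Then √(β/(α + 2β)) − √((α + β)/(2(α + 2β))) ≤ (β − α)/2. -/
/-!
With `D = α + 2β`, the two radicands differ by `(β - α) / (2D)`, and the smaller one is at least
`1/4` because `α ≥ 0`. Since `√p - √q = (p - q) / (√p + √q)` and `√p + √q ≥ √q ≥ 1/2`, the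
difference of the square roots is at most `(β - α) / D`, and `D ≥ 2` because `α, β ≥ 2/3`.
-/

open Real

theorem Real.sqrt_sub_sqrt_le_div {p q c : ℝ} (hc : 0 < c) (hcq : c ≤ √q) (hqp : q ≤ p) :
    √p - √q ≤ (p - q) / c := by
  have hq : 0 ≤ q := (Real.sqrt_pos.mp (hc.trans_le hcq)).le
  have hprod : (√p - √q) * (√p + √q) = p - q := by
    linear_combination sq_sqrt (hq.trans hqp) - sq_sqrt hq
  rw [le_div_iff₀ hc, ← hprod]
  exact mul_le_mul_of_nonneg_left (by linarith [Real.sqrt_nonneg p])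
    (by linarith [Real.sqrt_le_sqrt hqp])

theorem stmt_13 (α β : ℝ) (hα : 2 / 3 ≤ α) (hαβ : α ≤ β) :
    Real.sqrt (β / (α + 2 * β)) - Real.sqrt ((α + β) / (2 * (α + 2 * β))) ≤ (β - α) / 2 := by
  have hD : 2 ≤ α + 2 * β := by linarith
  have hgap : β / (α + 2 * β) - (α + β) / (2 * (α + 2 * β)) = (β - α) / (2 * (α + 2 * β)) := by
    field_simp
    ring
  have hqp : (α + β) / (2 * (α + 2 * β)) ≤ β / (α + 2 * β) := by
    have : 0 ≤ (β - α) / (2 * (α + 2 * β)) := div_nonneg (by linarith) (by positivity)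
    linarith
  have hq : 1 / 2 ≤ √((α + β) / (2 * (α + 2 * β))) := by
    rw [le_sqrt' (by norm_num), le_div_iff₀ (by positivity)]
    linarith
  calc √(β / (α + 2 * β)) - √((α + β) / (2 * (α + 2 * β)))
      ≤ (β / (α + 2 * β) - (α + β) / (2 * (α + 2 * β))) / (1 / 2) :=
        Real.sqrt_sub_sqrt_le_div (by norm_num) hq hqp
    _ = (β - α) / (α + 2 * β) := by rw [hgap]; field_simp
    _ ≤ (β - α) / 2 := div_le_div_of_nonneg_left (by linarith) (by norm_num) hD
end

section
/- Let ρ > 0 be a real number, n ≥ 1 a natural number, and α, β real numbers with α ≥ 0 and β = α + 2ρ/√n. Define p₁ = 2/(4 + α), q₁ = 2/(4 + β), p₂ = p₃ = (2 + α)/(2(4 + α)), and q₂ = q₃ = (2 + β)/(2(4 + β)). Then (1/2)·[ (√p₁ − √q₁)² + (√p₂ − √q₂)² + (√p₃ − √q₃)² ] ≤ ρ²/(4n). -/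
/-! Writing `β = α + d`, each outcome probability moves by `O(d)` while staying bounded
below, so `(√p - √q)² ≤ (p - q)² / (4 q)` makes each Hellinger term `O(d²)`; the constants
give `d² / 128 = ρ² / (32 n)` in total, well within `ρ² / (4 n)`. -/

open Real

lemma sq_sqrt_sub_sqrt_le {p q : ℝ} (hq : 0 < q) (hqp : q ≤ p) :
    (√p - √q) ^ 2 ≤ (p - q) ^ 2 / (4 * q) := by
  have hfactor : p - q = (√p - √q) * (√p + √q) := by
    rw [mul_comm, ← sq_sub_sq, sq_sqrt (hq.le.trans hqp), sq_sqrt hq.le]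
  have hsum : 4 * q ≤ (√p + √q) ^ 2 := by
    nlinarith [sqrt_le_sqrt hqp, sq_sqrt hq.le, sqrt_nonneg q]
  rw [le_div_iff₀ (by positivity), hfactor, mul_pow]
  exact mul_le_mul_of_nonneg_left hsum (sq_nonneg _)

lemma sq_sqrt_two_div_sub_le {α β : ℝ} (hα : 0 ≤ α) (hαβ : α ≤ β) :
    (√(2 / (4 + α)) - √(2 / (4 + β))) ^ 2 ≤ (β - α) ^ 2 / 128 := by
  have hα4 : 0 < 4 + α := by linarith
  have hβ4 : 0 < 4 + β := by linarith
  calc (√(2 / (4 + α)) - √(2 / (4 + β))) ^ 2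
      ≤ (2 / (4 + α) - 2 / (4 + β)) ^ 2 / (4 * (2 / (4 + β))) :=
        sq_sqrt_sub_sqrt_le (by positivity) (by gcongr)
    _ = (β - α) ^ 2 / (2 * (4 + α) ^ 2 * (4 + β)) := by
        field_simp
        ring
    _ ≤ (β - α) ^ 2 / 128 :=
        div_le_div_of_nonneg_left (sq_nonneg _) (by norm_num) (by nlinarith)

lemma sq_sqrt_half_sub_le {α β : ℝ} (hα : 0 ≤ α) (hαβ : α ≤ β) :
    (√((2 + α) / (2 * (4 + α))) - √((2 + β) / (2 * (4 + β)))) ^ 2 ≤ (β - α) ^ 2 / 256 := by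
  have hα4 : 0 < 4 + α := by linarith
  have hβ4 : 0 < 4 + β := by linarith
  have hmono : (2 + α) / (2 * (4 + α)) ≤ (2 + β) / (2 * (4 + β)) := by
    rw [div_le_div_iff₀ (by positivity) (by positivity)]
    nlinarith
  rw [sub_sq_comm]
  calc (√((2 + β) / (2 * (4 + β))) - √((2 + α) / (2 * (4 + α)))) ^ 2
      ≤ ((2 + β) / (2 * (4 + β)) - (2 + α) / (2 * (4 + α))) ^ 2
          / (4 * ((2 + α) / (2 * (4 + α)))) :=
        sq_sqrt_sub_sqrt_le (by positivity) hmono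
    _ = (β - α) ^ 2 / (2 * (2 + α) * (4 + α) * (4 + β) ^ 2) := by
        field_simp
        ring
    _ ≤ (β - α) ^ 2 / 256 := by
        refine div_le_div_of_nonneg_left (sq_nonneg _) (by norm_num) ?_
        calc (256 : ℝ) = 2 * 2 * 4 * 4 ^ 2 := by norm_num
          _ ≤ 2 * (2 + α) * (4 + α) * (4 + β) ^ 2 := by gcongr <;> linarith

theorem stmt_14_general (ρ : ℝ) (hρ : 0 < ρ) (n : ℕ)
    (α β : ℝ) (hα : 0 ≤ α) (hβ : β = α + 2 * ρ / Real.sqrt n)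
    (p₁ p₂ p₃ q₁ q₂ q₃ : ℝ)
    (hp₁ : p₁ = 2 / (4 + α))
    (hq₁ : q₁ = 2 / (4 + β))
    (hp₂ : p₂ = (2 + α) / (2 * (4 + α)))
    (hp₃ : p₃ = (2 + α) / (2 * (4 + α)))
    (hq₂ : q₂ = (2 + β) / (2 * (4 + β)))
    (hq₃ : q₃ = (2 + β) / (2 * (4 + β))) :
    (1 / 2) * ((Real.sqrt p₁ - Real.sqrt q₁) ^ 2 + (Real.sqrt p₂ - Real.sqrt q₂) ^ 2 +
      (Real.sqrt p₃ - Real.sqrt q₃) ^ 2) ≤ ρ ^ 2 / (4 * n) := by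
  subst hp₁ hq₁ hp₂ hp₃ hq₂ hq₃
  have hαβ : α ≤ β := by
    rw [hβ]
    exact le_add_of_nonneg_right (div_nonneg (by linarith) (sqrt_nonneg _))
  have hgap : (β - α) ^ 2 = 4 * ρ ^ 2 / n := by
    rw [hβ, add_sub_cancel_left, div_pow, sq_sqrt (Nat.cast_nonneg n)]
    ring
  calc _ ≤ (1 / 2) * ((β - α) ^ 2 / 128 + (β - α) ^ 2 / 256 + (β - α) ^ 2 / 256) := by
        gcongr
        exacts [sq_sqrt_two_div_sub_le hα hαβ, sq_sqrt_half_sub_le hα hαβ,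
          sq_sqrt_half_sub_le hα hαβ]
    _ = ρ ^ 2 / (4 * n) / 8 := by
        rw [hgap]
        ring
    _ ≤ ρ ^ 2 / (4 * n) := div_le_self (by positivity) (by norm_num)

theorem stmt_14 (ρ : ℝ) (hρ : 0 < ρ) (n : ℕ) (hn : 1 ≤ n)
    (α β : ℝ) (hα : 0 ≤ α) (hβ : β = α + 2 * ρ / Real.sqrt n)
    (p₁ p₂ p₃ q₁ q₂ q₃ : ℝ)
    (hp₁ : p₁ = 2 / (4 + α))
    (hq₁ : q₁ = 2 / (4 + β))
    (hp₂ : p₂ = (2 + α) / (2 * (4 + α)))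
    (hp₃ : p₃ = (2 + α) / (2 * (4 + α)))
    (hq₂ : q₂ = (2 + β) / (2 * (4 + β)))
    (hq₃ : q₃ = (2 + β) / (2 * (4 + β))) :
    (1 / 2) * ((Real.sqrt p₁ - Real.sqrt q₁) ^ 2 + (Real.sqrt p₂ - Real.sqrt q₂) ^ 2 +
      (Real.sqrt p₃ - Real.sqrt q₃) ^ 2) ≤ ρ ^ 2 / (4 * n) :=
  stmt_14_general ρ hρ n α β hα hβ p₁ p₂ p₃ q₁ q₂ q₃ hp₁ hq₁ hp₂ hp₃ hq₂ hq₃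
end

section
/- Let α, β be real numbers with 0 ≤ α ≤ β. Then √((2 + β)/(2(4 + β))) − √((2 + α)/(2(4 + α))) ≤ (β − α)/16. -/
/-!
Writing `f t = (2 + t) / (2 * (4 + t)) = 1/2 - 1/(4 + t)`, we get `f β - f α = (β - α) / ((4 + α)(4 + β))`,
which is at most `(β - α) / 16`, and `f ≥ 1/4` on `[0, ∞)`. On `[1/4, ∞)` the square root is
`1`-Lipschitz, because `√q - √p = (q - p) / (√q + √p)` and `√q + √p ≥ 1` there.
-/

open Real

lemma Real.sqrt_sub_sqrt_le_sub {p q : ℝ} (hp : 1 / 4 ≤ p) (hpq : p ≤ q) :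
    √q - √p ≤ q - p := by
  have hsp : 1 / 2 ≤ √p := (le_sqrt (by norm_num) (by linarith)).2 (by linarith)
  have hspq : √p ≤ √q := sqrt_le_sqrt hpq
  have hsq_p : √p ^ 2 = p := sq_sqrt (by linarith)
  have hsq_q : √q ^ 2 = q := sq_sqrt (by linarith)
  -- `q - p - (√q - √p) = (√q - √p) (√q + √p - 1)`, a product of nonnegative factors
  nlinarith [mul_nonneg (sub_nonneg.2 hspq) (by linarith : 0 ≤ √q + √p - 1)]

lemma two_add_div_eq_half_sub_one_div {t : ℝ} (ht : 4 + t ≠ 0) :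
    (2 + t) / (2 * (4 + t)) = 1 / 2 - 1 / (4 + t) := by
  field_simp
  ring

lemma one_div_four_add_sub_one_div_four_add_le {α β : ℝ} (hα : 0 ≤ α) (hαβ : α ≤ β) :
    1 / (4 + α) - 1 / (4 + β) ≤ (β - α) / 16 := by
  have hα4 : 0 < 4 + α := by linarith
  have hβ4 : 0 < 4 + β := by linarith
  calc 1 / (4 + α) - 1 / (4 + β) = (β - α) / ((4 + α) * (4 + β)) := by
        field_simp
        ring
    _ ≤ (β - α) / 16 :=
        div_le_div_of_nonneg_left (by linarith) (by norm_num) (by nlinarith)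

theorem stmt_16 (α β : ℝ) (hα : 0 ≤ α) (hαβ : α ≤ β) :
    Real.sqrt ((2 + β) / (2 * (4 + β))) - Real.sqrt ((2 + α) / (2 * (4 + α))) ≤ (β - α) / 16 := by
  have hα4 : 0 < 4 + α := by linarith
  rw [two_add_div_eq_half_sub_one_div (by linarith), two_add_div_eq_half_sub_one_div hα4.ne']
  have hquarter : 1 / 4 ≤ 1 / 2 - 1 / (4 + α) := by
    have : 1 / (4 + α) ≤ 1 / 4 := one_div_le_one_div_of_le (by norm_num) (by linarith)
    linarith
  have hmono : 1 / 2 - 1 / (4 + α) ≤ 1 / 2 - 1 / (4 + β) := by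
    have : 1 / (4 + β) ≤ 1 / (4 + α) := one_div_le_one_div_of_le hα4 (by linarith)
    linarith
  calc _ ≤ (1 / 2 - 1 / (4 + β)) - (1 / 2 - 1 / (4 + α)) := sqrt_sub_sqrt_le_sub hquarter hmono
    _ = 1 / (4 + α) - 1 / (4 + β) := by ring
    _ ≤ (β - α) / 16 := one_div_four_add_sub_one_div_four_add_le hα hαβ
end

section
/- Let n ≥ 2 be a natural number, α ∈ (0, 1] a real number, k a natural number with k ≥ α·n, and h ∈ [0,1] a real number. Suppose 4·√(log n/(α·n)) ≤ 1/6. Let X_1,…,X_k be independent identically distributed {0,1}-valued random variables on a probability space with ℙ(X_i = 1) = 1/(2 + h) for each i, and set A = (Σ_{i=1}^k X_i)/k. Then with probability at least 1 − 1/n⁶, both A ≥ 1/6 and the real number h′ := 1/A − 2 satisfies |h′ − h| ≤ 72·√(log n/(α·n)). -/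
/-!
Hoeffding's inequality for the `[0, 1]`-valued `X i` puts the empirical frequency `A` within
`t = 4 √(log n / (α n))` of `p = 1 / (2 + h)` except with probability `2 exp (-2 k t²)`, which is
at most `n⁻⁶` because `k t² ≥ 16 log n`. On the good event `A ≥ p - t ≥ 1/6`, so `A p ≥ 1/18` and
`|1/A - 1/p| = |A - p| / (A p) ≤ 18 t`; and `1/p - 2 = h`.
-/

open MeasureTheory ProbabilityTheory Real

namespace ProbabilityTheory

variable {Ω : Type*} {mΩ : MeasurableSpace Ω} {μ : Measure Ω}

lemma integral_eq_measureReal_of_forall_eq_zero_or_one {f : Ω → ℝ} (hf : Measurable f)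
    (h01 : ∀ ω, f ω = 0 ∨ f ω = 1) : μ[f] = μ.real {ω | f ω = 1} := by
  have hind : f = {ω | f ω = 1}.indicator 1 := by
    funext ω
    rcases h01 ω with h | h <;> simp [h]
  conv_lhs => rw [hind]
  exact integral_indicator_one (hf (measurableSet_singleton 1))

lemma ofReal_one_sub_le_measure_of_compl_subset [IsProbabilityMeasure μ] {s t : Set Ω} {δ : ℝ}
    (hts : tᶜ ⊆ s) (ht : μ.real t ≤ δ) : ENNReal.ofReal (1 - δ) ≤ μ s := by
  apply ENNReal.ofReal_le_of_le_toReal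
  rw [← measureReal_def]
  have hcover := measureReal_union_le (μ := μ) s sᶜ
  rw [Set.union_compl_self, probReal_univ] at hcover
  linarith [measureReal_mono (μ := μ) (Set.compl_subset_comm.1 hts)]

lemma HasSubgaussianMGF.measureReal_abs_ge_le {X : Ω → ℝ} {c : NNReal}
    (hX : HasSubgaussianMGF X c μ) {ε : ℝ} (hε : 0 ≤ ε) :
    μ.real {ω | ε ≤ |X ω|} ≤ 2 * exp (-ε ^ 2 / (2 * c)) := by
  have hsplit : {ω | ε ≤ |X ω|} = {ω | ε ≤ X ω} ∪ {ω | ε ≤ (-X) ω} := by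
    ext ω
    simp only [Set.mem_ofPred_eq, Set.mem_union, Pi.neg_apply, le_abs]
  calc μ.real {ω | ε ≤ |X ω|}
      ≤ μ.real {ω | ε ≤ X ω} + μ.real {ω | ε ≤ (-X) ω} := hsplit ▸ measureReal_union_le _ _
    _ ≤ exp (-ε ^ 2 / (2 * c)) + exp (-ε ^ 2 / (2 * c)) :=
        add_le_add (hX.measure_ge_le hε) (hX.neg.measure_ge_le hε)
    _ = 2 * exp (-ε ^ 2 / (2 * c)) := by ring

lemma measureReal_abs_mean_sub_ge_le [IsProbabilityMeasure μ] {ι : Type*} [Fintype ι]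
    [Nonempty ι] {X : ι → Ω → ℝ} (hindep : iIndepFun X μ) (hmeas : ∀ i, AEMeasurable (X i) μ)
    (hX : ∀ i, ∀ᵐ ω ∂μ, X i ω ∈ Set.Icc 0 1) {p : ℝ} (hmean : ∀ i, μ[X i] = p)
    {t : ℝ} (ht : 0 ≤ t) :
    μ.real {ω | t ≤ |(∑ i, X i ω) / Fintype.card ι - p|} ≤
      2 * exp (-2 * Fintype.card ι * t ^ 2) := by
  set N : ℝ := (Fintype.card ι : ℝ)
  have hN : 0 < N := by positivity
  have hcentered : ∀ i, HasSubgaussianMGF (fun ω ↦ X i ω - p) (1 / 4) μ := fun i ↦ by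
    convert hasSubgaussianMGF_of_mem_Icc (hmeas i) (hX i) using 2
    · rw [hmean]
    · norm_num
  have hsum := HasSubgaussianMGF.sum_of_iIndepFun
    (hindep.comp (fun _ x ↦ x - p) fun _ ↦ measurable_sub_const p) (s := Finset.univ)
    fun i _ ↦ hcentered i
  have hscale : ∀ ω, ∑ i, ((fun x ↦ x - p) ∘ X i) ω = N * ((∑ i, X i ω) / N - p) := fun ω ↦ by
    simp only [Function.comp_apply, Finset.sum_sub_distrib, Finset.sum_const, Finset.card_univ,
      nsmul_eq_mul]
    rw [mul_sub, mul_div_cancel₀ _ hN.ne', mul_comm]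
  have hevent : {ω | t ≤ |(∑ i, X i ω) / N - p|} =
      {ω | N * t ≤ |∑ i, ((fun x ↦ x - p) ∘ X i) ω|} := by
    ext ω
    rw [Set.mem_ofPred_eq, Set.mem_ofPred_eq, hscale, abs_mul, abs_of_pos hN,
      mul_le_mul_iff_right₀ hN]
  rw [hevent]
  refine (hsum.measureReal_abs_ge_le (by positivity)).trans_eq ?_
  simp only [Finset.sum_const, Finset.card_univ, nsmul_eq_mul]
  push_cast
  congr 2
  field_simp
  ring

end ProbabilityTheory

lemma one_div_le_and_abs_one_div_sub_one_div_le {a p t : ℝ} (hp : 1 / 3 ≤ p) (ht : t ≤ 1 / 6)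
    (hap : |a - p| ≤ t) : 1 / 6 ≤ a ∧ |1 / a - 1 / p| ≤ 18 * t := by
  have ha : 1 / 6 ≤ a := by linarith [(abs_le.1 hap).1]
  refine ⟨ha, ?_⟩
  have hap' : 1 / 18 ≤ a * p := by nlinarith
  have ha0 : 0 < a := by linarith
  have hp0 : 0 < p := by linarith
  calc |1 / a - 1 / p| = |a - p| / (a * p) := by
        rw [one_div, one_div, inv_sub_inv ha0.ne' hp0.ne', abs_div, abs_sub_comm,
          abs_of_pos (mul_pos ha0 hp0)]
    _ ≤ t / (1 / 18) := div_le_div₀ ((abs_nonneg _).trans hap) hap (by norm_num) hap'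
    _ = 18 * t := by ring

lemma two_mul_exp_neg_le_one_div_pow_six {n : ℕ} (hn : 2 ≤ n) {x : ℝ}
    (hx : 7 * log n ≤ x) : 2 * exp (-x) ≤ 1 / (n : ℝ) ^ 6 := by
  have hn2 : (2 : ℝ) ≤ n := by exact_mod_cast hn
  have hn0 : (0 : ℝ) < n := by linarith
  have hexp : exp (-x) ≤ 1 / (n : ℝ) ^ 7 := by
    calc exp (-x) ≤ exp (-(7 * log n)) := exp_le_exp.2 (neg_le_neg hx)
      _ = 1 / (n : ℝ) ^ 7 := by
        rw [exp_neg, show 7 * log n = log ((n : ℝ) ^ 7) by rw [log_pow]; norm_num,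
          exp_log (by positivity), one_div]
  calc 2 * exp (-x) ≤ 2 * (1 / (n : ℝ) ^ 7) := by gcongr
    _ ≤ n * (1 / (n : ℝ) ^ 7) := by gcongr
    _ = 1 / (n : ℝ) ^ 6 := by field_simp

theorem stmt_17_general {Ω : Type*} [MeasureSpace Ω] [IsProbabilityMeasure (ℙ : Measure Ω)]
    (n : ℕ) (hn : 2 ≤ n) (α : ℝ) (hα0 : 0 < α)
    (k : ℕ) (hk : α * n ≤ k)
    (h : ℝ) (hh0 : 0 ≤ h) (hh1 : h ≤ 1)
    (hsmall : 4 * Real.sqrt (Real.log n / (α * n)) ≤ 1 / 6)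
    (X : Fin k → Ω → ℝ)
    (hXmeas : ∀ i, Measurable (X i))
    (hX01 : ∀ i ω, X i ω = 0 ∨ X i ω = 1)
    (hXindep : iIndepFun X ℙ)
    (hXp : ∀ i, ℙ {ω | X i ω = 1} = ENNReal.ofReal (1 / (2 + h))) :
    ENNReal.ofReal (1 - 1 / (n : ℝ) ^ 6) ≤
      ℙ {ω | 1 / 6 ≤ (∑ i, X i ω) / k ∧
        |(1 / ((∑ i, X i ω) / k) - 2) - h| ≤ 72 * Real.sqrt (Real.log n / (α * n))} := by
  set ε := √(log n / (α * n))
  set p := 1 / (2 + h)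
  have hlog : 0 ≤ log n := log_natCast_nonneg n
  have hαn : 0 < α * n := mul_pos hα0 (by exact_mod_cast (by omega : 0 < n))
  have : Nonempty (Fin k) := ⟨⟨0, by exact_mod_cast hαn.trans_le hk⟩⟩
  have hp : 1 / 3 ≤ p := one_div_le_one_div_of_le (by positivity) (by linarith)
  have hmean : ∀ i, ∫ ω, X i ω = p := fun i ↦ by
    rw [integral_eq_measureReal_of_forall_eq_zero_or_one (hXmeas i) (hX01 i), measureReal_def,
      hXp, ENNReal.toReal_ofReal (by positivity)]
  have htail := measureReal_abs_mean_sub_ge_le hXindep (fun i ↦ (hXmeas i).aemeasurable)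
    (fun i ↦ ae_of_all _ fun ω ↦ by rcases hX01 i ω with hx | hx <;> simp [hx]) hmean
    (t := 4 * ε) (by positivity)
  rw [Fintype.card_fin, neg_mul, neg_mul] at htail
  have hexponent : 7 * log n ≤ 2 * k * (4 * ε) ^ 2 := by
    have hεsq : ε ^ 2 = log n / (α * n) := sq_sqrt (by positivity)
    have hkαn : 1 ≤ k / (α * n) := (one_le_div hαn).2 hk
    calc 7 * log n ≤ 32 * (k / (α * n)) * log n := by nlinarith
      _ = 2 * k * (4 * ε) ^ 2 := by rw [mul_pow, hεsq]; ring
  refine ofReal_one_sub_le_measure_of_compl_subset (fun ω hω ↦ ?_)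
    (htail.trans (two_mul_exp_neg_le_one_div_pow_six hn hexponent))
  simp only [Set.mem_compl_iff, Set.mem_ofPred_eq, not_le] at hω
  obtain ⟨hA, hinv⟩ := one_div_le_and_abs_one_div_sub_one_div_le hp hsmall hω.le
  rw [one_div_one_div, ← sub_sub] at hinv
  exact ⟨hA, by linarith⟩

theorem stmt_17 {Ω : Type*} [MeasureSpace Ω] [IsProbabilityMeasure (ℙ : Measure Ω)]
    (n : ℕ) (hn : 2 ≤ n) (α : ℝ) (hα0 : 0 < α) (hα1 : α ≤ 1)
    (k : ℕ) (hk : α * n ≤ k)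
    (h : ℝ) (hh0 : 0 ≤ h) (hh1 : h ≤ 1)
    (hsmall : 4 * Real.sqrt (Real.log n / (α * n)) ≤ 1 / 6)
    (X : Fin k → Ω → ℝ)
    (hXmeas : ∀ i, Measurable (X i))
    (hX01 : ∀ i ω, X i ω = 0 ∨ X i ω = 1)
    (hXindep : iIndepFun X ℙ)
    (hXp : ∀ i, ℙ {ω | X i ω = 1} = ENNReal.ofReal (1 / (2 + h))) :
    ENNReal.ofReal (1 - 1 / (n : ℝ) ^ 6) ≤
      ℙ {ω | 1 / 6 ≤ (∑ i, X i ω) / k ∧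
        |(1 / ((∑ i, X i ω) / k) - 2) - h| ≤ 72 * Real.sqrt (Real.log n / (α * n))} :=
  stmt_17_general n hn α hα0 k hk h hh0 hh1 hsmall X hXmeas hX01 hXindep hXp
end
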